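/- Let X, A be random variables with finite ranges and L a {0,1}-valued random variable, such that conditioned on L=0 the variable A is independent of X (Pr(A=a | X=x, L=0) = Pr(A=a | L=0) whenever Pr(X=x, L=0) > 0), and Pr(L=0 | X=x, A=a) > 0 whenever Pr(X=x, A=a) > 0. Then susp(X,A) − susp(X) + H(A|X) = −Σ_a Pr(A=a)·log Pr(A=a | L=0); that is, the expected increase in suspicion given X plus the conditional entropy of A given X equals the cross-entropy of the distribution of A relative to the conditional distribution of A given L=0. -/

import Mathlib

/-!
For every outcome `(x, a)` of positive probability, Bayes' rule
`Pr(L=0 | x, a) · Pr(a | x) = Pr(L=0 | x) · Pr(a | x, L=0)` splits the suspicion increase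
`-log Pr(L=0 | x, a) + log Pr(L=0 | x)` into `-log Pr(a | x, L=0) + log Pr(a | x)`. The second
term cancels the conditional entropy contribution `-log Pr(a | x)`, and conditional independence
replaces `Pr(a | x, L=0)` by `Pr(a | L=0)`. Averaging over `(x, a)` gives the cross-entropy.
-/

open Finset

/-- Probability of an event `E` under the probability mass function `p`
on a finite sample space `Ω`. -/
noncomputable def Pr {Ω : Type*} [Fintype Ω] (p : Ω → ℝ) (E : Set Ω) : ℝ :=
  ∑ ω, E.indicator p ω

/-- Conditional probability `Pr(E | F)`. -/
noncomputable def cPr {Ω : Type*} [Fintype Ω] (p : Ω → ℝ) (E F : Set Ω) : ℝ :=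
  Pr p (E ∩ F) / Pr p F

/-- The suspicion given a random variable `Yv`:
`susp(Y) = Σ_y Pr(Y=y) · (−log₂ Pr(L=0 | Y=y))`. -/
noncomputable def susp {Ω Y : Type*} [Fintype Ω] [Fintype Y] (p : Ω → ℝ)
    (L : Ω → Bool) (Yv : Ω → Y) : ℝ :=
  ∑ y, Pr p {ω | Yv ω = y} * (-Real.logb 2 (cPr p {ω | L ω = false} {ω | Yv ω = y}))

/-- Mutual information (base 2) between two finite-valued random variables. -/
noncomputable def mutInfo {Ω S T : Type*} [Fintype Ω] [Fintype S] [Fintype T]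
    (p : Ω → ℝ) (Xv : Ω → S) (Av : Ω → T) : ℝ :=
  ∑ x, ∑ a, Pr p {ω | Xv ω = x ∧ Av ω = a} *
    Real.logb 2 (Pr p {ω | Xv ω = x ∧ Av ω = a} /
      (Pr p {ω | Xv ω = x} * Pr p {ω | Av ω = a}))

/-- Conditional Shannon entropy (base 2) `H(A | X)`. -/
noncomputable def condEntropy {Ω S T : Type*} [Fintype Ω] [Fintype S] [Fintype T]
    (p : Ω → ℝ) (Av : Ω → T) (Xv : Ω → S) : ℝ :=
  ∑ x, ∑ a, Pr p {ω | Xv ω = x ∧ Av ω = a} *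
    Real.logb 2 (Pr p {ω | Xv ω = x} / Pr p {ω | Xv ω = x ∧ Av ω = a})

/-- Conditional mutual information (base 2) `I(X; A | Z)`. -/
noncomputable def condMutInfo {Ω S T U : Type*} [Fintype Ω] [Fintype S] [Fintype T] [Fintype U]
    (p : Ω → ℝ) (Xv : Ω → S) (Av : Ω → T) (Zv : Ω → U) : ℝ :=
  ∑ z, ∑ x, ∑ a, Pr p {ω | Xv ω = x ∧ Av ω = a ∧ Zv ω = z} *
    Real.logb 2 ((Pr p {ω | Xv ω = x ∧ Av ω = a ∧ Zv ω = z} * Pr p {ω | Zv ω = z}) /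
      (Pr p {ω | Xv ω = x ∧ Zv ω = z} * Pr p {ω | Av ω = a ∧ Zv ω = z}))

section Pr

variable {Ω : Type*} [Fintype Ω] {p : Ω → ℝ}

lemma Pr_nonneg (hp : ∀ ω, 0 ≤ p ω) (E : Set Ω) : 0 ≤ Pr p E :=
  sum_nonneg fun ω _ => Set.indicator_nonneg (fun ω _ => hp ω) ω

lemma Pr_mono (hp : ∀ ω, 0 ≤ p ω) {E F : Set Ω} (h : E ⊆ F) : Pr p E ≤ Pr p F :=
  sum_le_sum fun ω _ => Set.indicator_le_indicator_of_subset h hp ω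

lemma Pr_inter_pos_of_cPr_pos (hp : ∀ ω, 0 ≤ p ω) {E F : Set Ω} (h : 0 < cPr p E F) :
    0 < Pr p (E ∩ F) := by
  rcases (Pr_nonneg hp F).eq_or_lt with hF | hF
  · simp [cPr, ← hF] at h
  · exact (div_pos_iff_of_pos_right hF).mp h

lemma sum_Pr_inter_fiber {T : Type*} [Fintype T] (E : Set Ω) (A : Ω → T) :
    ∑ a, Pr p (E ∩ {ω | A ω = a}) = Pr p E := by
  classical
  unfold Pr
  rw [sum_comm]
  refine sum_congr rfl fun ω _ => ?_
  simp only [Set.indicator_apply, Set.mem_inter_iff, Set.mem_ofPred_eq]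
  simp [ite_and]

section Joint

variable {S T : Type*} [Fintype S] [Fintype T] (X : Ω → S) (A : Ω → T)

lemma sum_Pr_mul_eq_sum_joint_left (g : S → ℝ) :
    ∑ x, Pr p {ω | X ω = x} * g x = ∑ x, ∑ a, Pr p {ω | X ω = x ∧ A ω = a} * g x := by
  simp only [← sum_mul, Set.ofPred_and, sum_Pr_inter_fiber]

lemma sum_Pr_mul_eq_sum_joint_right (f : T → ℝ) :
    ∑ a, Pr p {ω | A ω = a} * f a = ∑ x, ∑ a, Pr p {ω | X ω = x ∧ A ω = a} * f a := by
  simp only [and_comm (a := X _ = _), Set.ofPred_and]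
  rw [sum_comm]
  simp only [← sum_mul, sum_Pr_inter_fiber]

lemma susp_pair (L : Ω → Bool) :
    susp p L (fun ω => (X ω, A ω)) = ∑ x, ∑ a, Pr p {ω | X ω = x ∧ A ω = a} *
      -Real.logb 2 (cPr p {ω | L ω = false} {ω | X ω = x ∧ A ω = a}) := by
  simp only [susp, Fintype.sum_prod_type, Prod.mk.injEq]

end Joint

/-- Bayes' rule in a form that needs no positivity: if `Pr(F ∩ G)` or `Pr(F ∩ E)` vanishes,
both sides are `0` because `x / 0 = 0`. -/
lemma cPr_inter_mul_cPr (hp : ∀ ω, 0 ≤ p ω) (E F G : Set Ω) :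
    cPr p E (F ∩ G) * cPr p G F = cPr p E F * cPr p G (F ∩ E) := by
  have hEFG : G ∩ (F ∩ E) = E ∩ (F ∩ G) := by
    ext ω; simp only [Set.mem_inter_iff]; tauto
  unfold cPr
  rw [Set.inter_comm G F, Set.inter_comm E F, hEFG]
  rcases (Pr_nonneg hp (F ∩ G)).eq_or_lt with hFG | hFG
  · have h0 : Pr p (E ∩ (F ∩ G)) = 0 :=
      le_antisymm (hFG ▸ Pr_mono hp Set.inter_subset_right) (Pr_nonneg hp _)
    simp [h0]
  rcases (Pr_nonneg hp (F ∩ E)).eq_or_lt with hFE | hFE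
  · have h0 : Pr p (E ∩ (F ∩ G)) = 0 :=
      le_antisymm (hFE ▸ Pr_mono hp fun ω h => ⟨h.2.1, h.1⟩) (Pr_nonneg hp _)
    simp [h0]
  field_simp

lemma neg_logb_cPr_inter_add_logb_div (hp : ∀ ω, 0 ≤ p ω) {E F G : Set Ω}
    (hFG : 0 < Pr p (F ∩ G)) (hE : 0 < cPr p E (F ∩ G)) :
    -Real.logb 2 (cPr p E (F ∩ G)) - -Real.logb 2 (cPr p E F) +
        Real.logb 2 (Pr p F / Pr p (F ∩ G)) = -Real.logb 2 (cPr p G (F ∩ E)) := by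
  have hG : 0 < cPr p G F := by
    rw [cPr, Set.inter_comm]
    exact div_pos hFG (hFG.trans_le (Pr_mono hp Set.inter_subset_left))
  have hratio : Pr p F / Pr p (F ∩ G) = (cPr p G F)⁻¹ := by
    rw [cPr, inv_div, Set.inter_comm]
  have hbayes := cPr_inter_mul_cPr hp E F G
  have hprod : cPr p E F * cPr p G (F ∩ E) ≠ 0 := hbayes ▸ (mul_pos hE hG).ne'
  have hlog := congrArg (Real.logb 2) hbayes
  rw [Real.logb_mul hE.ne' hG.ne',
    Real.logb_mul (left_ne_zero_of_mul hprod) (right_ne_zero_of_mul hprod)] at hlog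
  rw [hratio, Real.logb_inv]
  linarith

end Pr

theorem susp_increase_add_condEntropy_eq_crossEntropy_general
    {Ω S T : Type*} [Fintype Ω] [Fintype S] [Fintype T]
    (p : Ω → ℝ) (hp : ∀ ω, 0 ≤ p ω)
    (X : Ω → S) (A : Ω → T) (L : Ω → Bool)
    (hindep : ∀ (a : T) (x : S), 0 < Pr p {ω | X ω = x ∧ L ω = false} →
      cPr p {ω | A ω = a} {ω | X ω = x ∧ L ω = false} =
        cPr p {ω | A ω = a} {ω | L ω = false})
    (hpos : ∀ (x : S) (a : T), 0 < Pr p {ω | X ω = x ∧ A ω = a} →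
      0 < cPr p {ω | L ω = false} {ω | X ω = x ∧ A ω = a}) :
    susp p L (fun ω => (X ω, A ω)) - susp p L X + condEntropy p A X =
      -(∑ a : T, Pr p {ω | A ω = a} *
        Real.logb 2 (cPr p {ω | A ω = a} {ω | L ω = false})) := by
  rw [susp_pair, susp, sum_Pr_mul_eq_sum_joint_left X A, sum_Pr_mul_eq_sum_joint_right X A,
    condEntropy]
  simp only [← sum_sub_distrib, ← sum_add_distrib, ← sum_neg_distrib]
  refine sum_congr rfl fun x _ => sum_congr rfl fun a _ => ?_
  simp only [Set.ofPred_and] at hindep hpos ⊢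
  rcases (Pr_nonneg hp ({ω | X ω = x} ∩ {ω | A ω = a})).eq_or_lt with hxa | hxa
  · simp [← hxa]
  have hL := hpos x a hxa
  have hxL : 0 < Pr p ({ω | X ω = x} ∩ {ω | L ω = false}) :=
    (Pr_inter_pos_of_cPr_pos hp hL).trans_le (Pr_mono hp fun ω h => ⟨h.2.1, h.1⟩)
  have key := neg_logb_cPr_inter_add_logb_div hp hxa hL
  rw [hindep a x hxL] at key
  linear_combination Pr p ({ω | X ω = x} ∩ {ω | A ω = a}) * key

/-- `susp(X,A) − susp(X) + H(A|X) = −Σ_a Pr(A=a)·log₂ Pr(A=a | L=0)`. -/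
theorem susp_increase_add_condEntropy_eq_crossEntropy
    {Ω S T : Type*} [Fintype Ω] [Fintype S] [Fintype T]
    (p : Ω → ℝ) (hp : ∀ ω, 0 ≤ p ω) (hp1 : ∑ ω, p ω = 1)
    (X : Ω → S) (A : Ω → T) (L : Ω → Bool)
    (hindep : ∀ (a : T) (x : S), 0 < Pr p {ω | X ω = x ∧ L ω = false} →
      cPr p {ω | A ω = a} {ω | X ω = x ∧ L ω = false} =
        cPr p {ω | A ω = a} {ω | L ω = false})
    (hpos : ∀ (x : S) (a : T), 0 < Pr p {ω | X ω = x ∧ A ω = a} →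
      0 < cPr p {ω | L ω = false} {ω | X ω = x ∧ A ω = a}) :
    susp p L (fun ω => (X ω, A ω)) - susp p L X + condEntropy p A X =
      -(∑ a : T, Pr p {ω | A ω = a} *
        Real.logb 2 (cPr p {ω | A ω = a} {ω | L ω = false})) :=
  susp_increase_add_condEntropy_eq_crossEntropy_general p hp X A L hindep hpos
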